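/- arXiv:1810.08754 — 4 statements merged into one kernel-verified Lean document; each statement's English description precedes it below -/
import Mathlib

section
/- Define operators H, G : ℓ²(ℤ) → ℓ²(ℤ) by (Hᵀ v)_k = ∑_i h_i v_{2k+i} and (Gᵀ v)_k = ∑_i g_i v_{2k+i}, where (h_i) is finitely supported with ∑ h_i² = 1, ∑ h_i h_{i+2m} = 0 for m ≠ 0, and g_i = (−1)^{1−i} h_{1−i}. Then Hᵀ H = I and Gᵀ G = I on ℓ²(ℤ). -/
/-!
Writing out `Hᵀ H w` at index `k` and exchanging the (finite) sum over the filter taps with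
the sum over `k'`, the coefficient of `w k'` is the autocorrelation `∑ᵢ hᵢ h_{i + 2(k - k')}`
of `h` at an even shift, which is `1` for `k' = k` and `0` otherwise. The mirrored filter `g`
has the same even-shift autocorrelations, because `i ↦ 1 - 2m - i` carries the products for
`g` to those for `h`, and the two signs `(-1)^(1-i)` and `(-1)^(1-i-2m)` cancel.
-/

open Function

section EvenShiftOrthonormal

variable {h : ℤ → ℝ}

lemma finsum_mul_shift_two_mul_eq_ite (hnorm : ∑ᶠ i : ℤ, (h i) ^ 2 = 1)
    (horth : ∀ m : ℤ, m ≠ 0 → ∑ᶠ i : ℤ, h i * h (i + 2 * m) = 0) (m : ℤ) :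
    ∑ᶠ i : ℤ, h i * h (i + 2 * m) = if m = 0 then 1 else 0 := by
  split_ifs with hm
  · subst hm
    simpa only [mul_zero, add_zero, sq] using hnorm
  · exact horth m hm

lemma finite_support_comp_two_mul_sub (hfin : (support h).Finite) (c : ℤ) :
    (support fun k' : ℤ => h (c - 2 * k')).Finite :=
  hfin.preimage fun _ _ _ _ hab => by omega

theorem tsum_mul_tsum_two_mul_sub_eq_self (hfin : (support h).Finite)
    (hcorr : ∀ m : ℤ, ∑ᶠ i : ℤ, h i * h (i + 2 * m) = if m = 0 then 1 else 0)
    (w : ℤ → ℝ) (k : ℤ) :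
    ∑' i : ℤ, h i * ∑' k' : ℤ, h (2 * k + i - 2 * k') * w k' = w k := by
  set s := hfin.toFinset
  have hs : support h ⊆ s := hfin.coe_toFinset.symm.subset
  have hsumm : ∀ i ∈ s, Summable fun k' : ℤ => h i * (h (2 * k + i - 2 * k') * w k') :=
    fun i _ => summable_of_hasFiniteSupport <|
      ((finite_support_comp_two_mul_sub hfin (2 * k + i)).subset
        (support_mul_subset_left _ _)).subset (support_mul_subset_right _ _)
  have hcoeff : ∀ k' : ℤ, ∑ i ∈ s, h i * (h (2 * k + i - 2 * k') * w k') =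
      if k' = k then w k' else 0 := by
    intro k'
    have hshift : ∀ i, 2 * k + i - 2 * k' = i + 2 * (k - k') := fun i => by ring
    calc ∑ i ∈ s, h i * (h (2 * k + i - 2 * k') * w k')
        = (∑ᶠ i : ℤ, h i * h (i + 2 * (k - k'))) * w k' := by
          rw [finsum_eq_sum_of_support_subset _ ((support_mul_subset_left _ _).trans hs),
            Finset.sum_mul]
          simp only [hshift, mul_assoc]
      _ = if k' = k then w k' else 0 := by
          rw [hcorr]
          by_cases hk : k' = k
          · simp [hk]
          · simp [hk, sub_eq_zero, Ne.symm hk]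
  calc ∑' i : ℤ, h i * ∑' k' : ℤ, h (2 * k + i - 2 * k') * w k'
      = ∑ i ∈ s, ∑' k' : ℤ, h i * (h (2 * k + i - 2 * k') * w k') := by
        rw [tsum_eq_sum fun i hi => by
          rw [notMem_support.1 fun hi' => hi (hs hi'), zero_mul]]
        simp only [tsum_mul_left]
    _ = ∑' k' : ℤ, ∑ i ∈ s, h i * (h (2 * k + i - 2 * k') * w k') :=
        (Summable.tsum_finsetSum hsumm).symm
    _ = w k := by simp only [hcoeff, tsum_ite_eq]

end EvenShiftOrthonormal

section QuadratureMirror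

noncomputable def quadratureMirror (h : ℤ → ℝ) (i : ℤ) : ℝ := (-1 : ℝ) ^ (1 - i) * h (1 - i)

variable {h : ℤ → ℝ}

lemma support_quadratureMirror : support (quadratureMirror h) = (1 - ·) ⁻¹' support h := by
  ext i
  simp [quadratureMirror, zpow_ne_zero]

lemma finite_support_quadratureMirror (hfin : (support h).Finite) :
    (support (quadratureMirror h)).Finite := by
  rw [support_quadratureMirror]
  exact hfin.preimage sub_right_injective.injOn

lemma quadratureMirror_mul_shift_two_mul (i m : ℤ) :
    quadratureMirror h i * quadratureMirror h (i + 2 * m) =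
      h (1 - 2 * m - i) * h (1 - 2 * m - i + 2 * m) := by
  have hsign : (-1 : ℝ) ^ (1 - i) * (-1 : ℝ) ^ (1 - 2 * m - i) = 1 := by
    rw [← zpow_add₀ (by norm_num)]
    exact Even.neg_one_zpow ⟨1 - i - m, by ring⟩
  rw [quadratureMirror, quadratureMirror, show 1 - (i + 2 * m) = 1 - 2 * m - i by ring,
    show 1 - 2 * m - i + 2 * m = 1 - i by ring]
  linear_combination (h (1 - i) * h (1 - 2 * m - i)) * hsign

lemma finsum_quadratureMirror_mul_shift_two_mul (m : ℤ) :
    ∑ᶠ i : ℤ, quadratureMirror h i * quadratureMirror h (i + 2 * m) =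
      ∑ᶠ i : ℤ, h i * h (i + 2 * m) := by
  simp only [quadratureMirror_mul_shift_two_mul]
  exact finsum_comp_equiv (Equiv.subLeft (1 - 2 * m)) (f := fun j => h j * h (j + 2 * m))

end QuadratureMirror

theorem wavelet_analysis_operators_isometry
    (h g : ℤ → ℝ)
    (hfin : (Function.support h).Finite)
    (hnorm : ∑ᶠ i : ℤ, (h i) ^ 2 = 1)
    (horth : ∀ m : ℤ, m ≠ 0 → ∑ᶠ i : ℤ, h i * h (i + 2 * m) = 0)
    (hg : ∀ i : ℤ, g i = (-1 : ℝ) ^ (1 - i) * h (1 - i)) :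
    ∀ w : lp (fun _ : ℤ => ℝ) 2,
      (∀ k : ℤ,
        ∑' i : ℤ, h i * (∑' k' : ℤ, h (2 * k + i - 2 * k') * (w : ℤ → ℝ) k')
          = (w : ℤ → ℝ) k) ∧
      (∀ k : ℤ,
        ∑' i : ℤ, g i * (∑' k' : ℤ, g (2 * k + i - 2 * k') * (w : ℤ → ℝ) k')
          = (w : ℤ → ℝ) k) := by
  obtain rfl : g = quadratureMirror h := funext hg
  have hcorr := finsum_mul_shift_two_mul_eq_ite hnorm horth
  have gcorr : ∀ m : ℤ, ∑ᶠ i : ℤ, quadratureMirror h i * quadratureMirror h (i + 2 * m) =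
      if m = 0 then 1 else 0 := fun m => by
    rw [finsum_quadratureMirror_mul_shift_two_mul, hcorr]
  intro w
  exact ⟨tsum_mul_tsum_two_mul_sub_eq_self hfin hcorr w,
    tsum_mul_tsum_two_mul_sub_eq_self (finite_support_quadratureMirror hfin) gcorr w⟩
end

section
/- Correctness of the full nonstandard-form multiplication: let W^{(ℓ)} be orthogonal matrices of size 2^{ℓ+1} × 2^{ℓ+1} for ℓ = L₀, …, L−1, and define recursively A^{(ℓ)} and D_j^{(ℓ)} (j=1,2,3) by [[D₁^{(ℓ)},D₂^{(ℓ)}],[D₃^{(ℓ)},A^{(ℓ)}]] = (W^{(ℓ)})ᵀ A^{(ℓ+1)} W^{(ℓ)}, starting from a given A^{(L)}. Given v^{(L)} ∈ ℝ^{2^L}, define (d^{(ℓ)}, v^{(ℓ)}) = (W^{(ℓ)})ᵀ v^{(ℓ+1)} for ℓ = L−1,…,L₀; set u^{(L₀)} = A^{(L₀)} v^{(L₀)}; and for ℓ = L₀,…,L−1 set u^{(ℓ+1)} = W^{(ℓ)} ( D₁^{(ℓ)} d^{(ℓ)} + D₂^{(ℓ)} v^{(ℓ)}, D₃^{(ℓ)}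 d^{(ℓ)} + u^{(ℓ)} ). Then u^{(L)} = A^{(L)} v^{(L)}. -/
/-!
Unrolling one level: with `B = Wᵀ A⁽ℓ⁺¹⁾ W` and `w = Wᵀ v⁽ℓ⁺¹⁾`, the pair
`(D₁ d + D₂ v⁽ℓ⁾, D₃ d + A⁽ℓ⁾ v⁽ℓ⁾)` is exactly `B w` read through the block structure, and
`W B w = (W Wᵀ) A⁽ℓ⁺¹⁾ (W Wᵀ) v⁽ℓ⁺¹⁾ = A⁽ℓ⁺¹⁾ v⁽ℓ⁺¹⁾`. So `u⁽ℓ⁾ = A⁽ℓ⁾ v⁽ℓ⁾` propagates from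
`ℓ = L₀` up to `ℓ = L`.
-/

open Matrix

/-- Identification of `ℝ^{2^ℓ} × ℝ^{2^ℓ}` index pairs with `ℝ^{2^{ℓ+1}}` indices. -/
def blockEquiv (ℓ : ℕ) : Fin (2 ^ ℓ) ⊕ Fin (2 ^ ℓ) ≃ Fin (2 ^ (ℓ + 1)) :=
  finSumFinEquiv.trans (finCongr (by rw [pow_succ, mul_two]))

namespace Matrix

variable {l m n α : Type*} [Fintype l] [Fintype m] [Fintype n]

theorem sumElim_blocks_mulVec_of_fromBlocks_eq_submatrix [NonUnitalNonAssocSemiring α]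
    {D₁ : Matrix l l α} {D₂ : Matrix l m α} {D₃ : Matrix m l α} {A : Matrix m m α}
    {B : Matrix n n α} {e : l ⊕ m ≃ n} (hB : fromBlocks D₁ D₂ D₃ A = B.submatrix e e)
    {x : l → α} {y : m → α} {w : n → α} (hw : Sum.elim x y = w ∘ e) :
    Sum.elim (D₁ *ᵥ x + D₂ *ᵥ y) (D₃ *ᵥ x + A *ᵥ y) = (B *ᵥ w) ∘ e :=
  calc Sum.elim (D₁ *ᵥ x + D₂ *ᵥ y) (D₃ *ᵥ x + A *ᵥ y)
      = fromBlocks D₁ D₂ D₃ A *ᵥ Sum.elim x y := by rw [fromBlocks_mulVec]; rfl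
    _ = (B *ᵥ w) ∘ e := by
      rw [hB, hw, submatrix_mulVec_equiv, Function.comp_assoc, e.self_comp_symm,
        Function.comp_id]

theorem mulVec_conj_mulVec_of_mul_eq_one [DecidableEq n] [Semiring α] {W W' : Matrix n n α}
    (hW : W * W' = 1) (A : Matrix n n α) (v : n → α) :
    W *ᵥ ((W' * A * W) *ᵥ (W' *ᵥ v)) = A *ᵥ v := by
  rw [mulVec_mulVec, mulVec_mulVec, ← Matrix.mul_assoc, ← Matrix.mul_assoc, hW,
    Matrix.one_mul, Matrix.mul_assoc, hW, Matrix.mul_one]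

theorem mulVec_sumElim_blocks_comp_symm_of_conj [DecidableEq n] [Semiring α]
    {W : Matrix n n α} (hW : W * Wᵀ = 1) {A' : Matrix n n α}
    {D₁ : Matrix l l α} {D₂ : Matrix l m α} {D₃ : Matrix m l α} {A : Matrix m m α}
    {e : l ⊕ m ≃ n} (hB : fromBlocks D₁ D₂ D₃ A = (Wᵀ * A' * W).submatrix e e)
    {x : l → α} {y : m → α} {v : n → α} (hv : Sum.elim x y = (Wᵀ *ᵥ v) ∘ e) :
    W *ᵥ (Sum.elim (D₁ *ᵥ x + D₂ *ᵥ y) (D₃ *ᵥ x + A *ᵥ y) ∘ e.symm) = A' *ᵥ v := by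
  rw [sumElim_blocks_mulVec_of_fromBlocks_eq_submatrix hB hv, Function.comp_assoc,
    e.self_comp_symm, Function.comp_id, mulVec_conj_mulVec_of_mul_eq_one hW]

end Matrix

theorem nonstandard_form_matvec_correct
    (L₀ L : ℕ) (hL : L₀ ≤ L)
    (W : ∀ ℓ : ℕ, Matrix (Fin (2 ^ (ℓ + 1))) (Fin (2 ^ (ℓ + 1))) ℝ)
    (hW : ∀ ℓ : ℕ, L₀ ≤ ℓ → ℓ < L → (W ℓ)ᵀ * W ℓ = 1 ∧ W ℓ * (W ℓ)ᵀ = 1)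
    (A D₁ D₂ D₃ : ∀ ℓ : ℕ, Matrix (Fin (2 ^ ℓ)) (Fin (2 ^ ℓ)) ℝ)
    (hdec : ∀ ℓ : ℕ, L₀ ≤ ℓ → ℓ < L →
      Matrix.fromBlocks (D₁ ℓ) (D₂ ℓ) (D₃ ℓ) (A ℓ) =
        ((W ℓ)ᵀ * A (ℓ + 1) * W ℓ).submatrix (blockEquiv ℓ) (blockEquiv ℓ))
    (v d : ∀ ℓ : ℕ, Fin (2 ^ ℓ) → ℝ)
    (hv : ∀ ℓ : ℕ, L₀ ≤ ℓ → ℓ < L →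
      Sum.elim (d ℓ) (v ℓ) = fun x => ((W ℓ)ᵀ.mulVec (v (ℓ + 1))) (blockEquiv ℓ x))
    (u : ∀ ℓ : ℕ, Fin (2 ^ ℓ) → ℝ)
    (hu0 : u L₀ = (A L₀).mulVec (v L₀))
    (hur : ∀ ℓ : ℕ, L₀ ≤ ℓ → ℓ < L →
      u (ℓ + 1) = (W ℓ).mulVec (fun j =>
        Sum.elim ((D₁ ℓ).mulVec (d ℓ) + (D₂ ℓ).mulVec (v ℓ))
          ((D₃ ℓ).mulVec (d ℓ) + u ℓ) ((blockEquiv ℓ).symm j))) :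
    u L = (A L).mulVec (v L) := by
  suffices h : ∀ ℓ, L₀ ≤ ℓ → ℓ ≤ L → u ℓ = A ℓ *ᵥ v ℓ from h L hL le_rfl
  intro ℓ hℓ
  induction ℓ, hℓ using Nat.le_induction with
  | base => exact fun _ => hu0
  | succ ℓ hℓ ih =>
    intro (hℓL : ℓ < L)
    rw [hur ℓ hℓ hℓL, ih hℓL.le]
    exact mulVec_sumElim_blocks_comp_symm_of_conj (hW ℓ hℓ hℓL).2 (hdec ℓ hℓ hℓL)
      (hv ℓ hℓ hℓL)
end

section
/- Prove the telescoping identity underlying the algorithm: with the notation above, for every ℓ with L₀ ≤ ℓ ≤ L, the vector u^{(ℓ)} produced by the algorithm equals A^{(ℓ)} v^{(ℓ)}. -/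
/-
Write `B = Wᵀ A⁽ℓ⁺¹⁾ W`. By the decomposition, `B` is the block matrix `[[D₁, D₂], [D₃, A⁽ℓ⁾]]`
and `Wᵀ v⁽ℓ⁺¹⁾ = (d⁽ℓ⁾, v⁽ℓ⁾)`, so once `u⁽ℓ⁾ = A⁽ℓ⁾ v⁽ℓ⁾` is known, the vector assembled by the
algorithm is `B Wᵀ v⁽ℓ⁺¹⁾`, and applying `W` gives `W Wᵀ A⁽ℓ⁺¹⁾ W Wᵀ v⁽ℓ⁺¹⁾ = A⁽ℓ⁺¹⁾ v⁽ℓ⁺¹⁾`.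
Induction upwards from `ℓ = L₀` finishes the proof.
-/

open Matrix

namespace Matrix

variable {R m n : Type*} [Fintype m] [Fintype n]

theorem mulVec_conj_mulVec_of_mul_transpose_eq_one [DecidableEq n] [Semiring R]
    {W A : Matrix n n R} (hW : W * Wᵀ = 1) (v : n → R) :
    W *ᵥ ((Wᵀ * A * W) *ᵥ (Wᵀ *ᵥ v)) = A *ᵥ v := by
  have hconj : W * (Wᵀ * A * W) * Wᵀ = A := by
    simp only [Matrix.mul_assoc, ← Matrix.mul_assoc W Wᵀ, hW, Matrix.one_mul, Matrix.mul_one]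
  rw [mulVec_mulVec, mulVec_mulVec, hconj]

theorem fromBlocks_mulVec_sumElim_of_eq_submatrix [Semiring R] {e : m ⊕ m ≃ n}
    {D₁ D₂ D₃ A : Matrix m m R} {B : Matrix n n R} (hB : fromBlocks D₁ D₂ D₃ A = B.submatrix e e)
    {d v : m → R} {w : n → R} (hw : Sum.elim d v = w ∘ e) :
    Sum.elim (D₁ *ᵥ d + D₂ *ᵥ v) (D₃ *ᵥ d + A *ᵥ v) = (B *ᵥ w) ∘ e := by
  have hw' : w = Sum.elim d v ∘ e.symm := by rw [hw]; ext; simp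
  rw [hw', ← submatrix_mulVec_equiv, ← hB, fromBlocks_mulVec]
  rfl

theorem mulVec_eq_of_nonstandard_step [DecidableEq n] [Semiring R] {e : m ⊕ m ≃ n}
    {W A' : Matrix n n R} (hW : W * Wᵀ = 1) {D₁ D₂ D₃ A : Matrix m m R}
    (hdec : fromBlocks D₁ D₂ D₃ A = (Wᵀ * A' * W).submatrix e e)
    {d v : m → R} {v' : n → R} (hv : Sum.elim d v = (Wᵀ *ᵥ v') ∘ e) :
    W *ᵥ (fun j => Sum.elim (D₁ *ᵥ d + D₂ *ᵥ v) (D₃ *ᵥ d + A *ᵥ v) (e.symm j)) = A' *ᵥ v' := by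
  rw [fromBlocks_mulVec_sumElim_of_eq_submatrix hdec hv]
  simpa only [Function.comp_apply, Equiv.apply_symm_apply] using
    mulVec_conj_mulVec_of_mul_transpose_eq_one hW v'

end Matrix

theorem nonstandard_form_matvec_invariant_general
    (L₀ L : ℕ)
    (W : ∀ ℓ : ℕ, Matrix (Fin (2 ^ (ℓ + 1))) (Fin (2 ^ (ℓ + 1))) ℝ)
    (hW : ∀ ℓ : ℕ, L₀ ≤ ℓ → ℓ < L → (W ℓ)ᵀ * W ℓ = 1 ∧ W ℓ * (W ℓ)ᵀ = 1)
    (A D₁ D₂ D₃ : ∀ ℓ : ℕ, Matrix (Fin (2 ^ ℓ)) (Fin (2 ^ ℓ)) ℝ)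
    (hdec : ∀ ℓ : ℕ, L₀ ≤ ℓ → ℓ < L →
      Matrix.fromBlocks (D₁ ℓ) (D₂ ℓ) (D₃ ℓ) (A ℓ) =
        ((W ℓ)ᵀ * A (ℓ + 1) * W ℓ).submatrix (blockEquiv ℓ) (blockEquiv ℓ))
    (v d : ∀ ℓ : ℕ, Fin (2 ^ ℓ) → ℝ)
    (hv : ∀ ℓ : ℕ, L₀ ≤ ℓ → ℓ < L →
      Sum.elim (d ℓ) (v ℓ) = fun x => ((W ℓ)ᵀ.mulVec (v (ℓ + 1))) (blockEquiv ℓ x))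
    (u : ∀ ℓ : ℕ, Fin (2 ^ ℓ) → ℝ)
    (hu0 : u L₀ = (A L₀).mulVec (v L₀))
    (hur : ∀ ℓ : ℕ, L₀ ≤ ℓ → ℓ < L →
      u (ℓ + 1) = (W ℓ).mulVec (fun j =>
        Sum.elim ((D₁ ℓ).mulVec (d ℓ) + (D₂ ℓ).mulVec (v ℓ))
          ((D₃ ℓ).mulVec (d ℓ) + u ℓ) ((blockEquiv ℓ).symm j))) :
    ∀ ℓ : ℕ, L₀ ≤ ℓ → ℓ ≤ L → u ℓ = (A ℓ).mulVec (v ℓ) := by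
  intro ℓ hℓ
  induction ℓ, hℓ using Nat.le_induction with
  | base => exact fun _ => hu0
  | succ ℓ hL₀ℓ ih =>
    intro hℓL
    have hℓ : ℓ < L := hℓL
    rw [hur ℓ hL₀ℓ hℓ, ih hℓ.le]
    exact mulVec_eq_of_nonstandard_step (hW ℓ hL₀ℓ hℓ).2 (hdec ℓ hL₀ℓ hℓ) (hv ℓ hL₀ℓ hℓ)

theorem nonstandard_form_matvec_invariant
    (L₀ L : ℕ) (hL : L₀ ≤ L)
    (W : ∀ ℓ : ℕ, Matrix (Fin (2 ^ (ℓ + 1))) (Fin (2 ^ (ℓ + 1))) ℝ)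
    (hW : ∀ ℓ : ℕ, L₀ ≤ ℓ → ℓ < L → (W ℓ)ᵀ * W ℓ = 1 ∧ W ℓ * (W ℓ)ᵀ = 1)
    (A D₁ D₂ D₃ : ∀ ℓ : ℕ, Matrix (Fin (2 ^ ℓ)) (Fin (2 ^ ℓ)) ℝ)
    (hdec : ∀ ℓ : ℕ, L₀ ≤ ℓ → ℓ < L →
      Matrix.fromBlocks (D₁ ℓ) (D₂ ℓ) (D₃ ℓ) (A ℓ) =
        ((W ℓ)ᵀ * A (ℓ + 1) * W ℓ).submatrix (blockEquiv ℓ) (blockEquiv ℓ))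
    (v d : ∀ ℓ : ℕ, Fin (2 ^ ℓ) → ℝ)
    (hv : ∀ ℓ : ℕ, L₀ ≤ ℓ → ℓ < L →
      Sum.elim (d ℓ) (v ℓ) = fun x => ((W ℓ)ᵀ.mulVec (v (ℓ + 1))) (blockEquiv ℓ x))
    (u : ∀ ℓ : ℕ, Fin (2 ^ ℓ) → ℝ)
    (hu0 : u L₀ = (A L₀).mulVec (v L₀))
    (hur : ∀ ℓ : ℕ, L₀ ≤ ℓ → ℓ < L →
      u (ℓ + 1) = (W ℓ).mulVec (fun j =>
        Sum.elim ((D₁ ℓ).mulVec (d ℓ) + (D₂ ℓ).mulVec (v ℓ))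
          ((D₃ ℓ).mulVec (d ℓ) + u ℓ) ((blockEquiv ℓ).symm j))) :
    ∀ ℓ : ℕ, L₀ ≤ ℓ → ℓ ≤ L → u ℓ = (A ℓ).mulVec (v ℓ) :=
  nonstandard_form_matvec_invariant_general L₀ L W hW A D₁ D₂ D₃ hdec v d hv u hu0 hur
end

section
/- Let A and A* have kernels a(x,y) and a(y,x). Suppose the wavelet ψ is supported in an interval of length 2p−1, has p vanishing moments, and the kernel a satisfies |∂_x^p a(x,y)| + |∂_y^p a(x,y)| ≤ C_p |x−y|^{−1−p} for x ≠ y. Then for |k₁ − k₂| ≥ 2p, the nonstandard-form coefficient D^{(ℓ)}_{1,k₁,k₂} = ∬ ψ^{(ℓ)}_{k₁}(x) a(x,y) ψ^{(ℓ)}_{k₂}(y) dx dy satisfies |D^{(ℓ)}_{1,k₁,k₂}| ≤ C'_p / (1 + |k₁−k₂|^{p+1}) for a constant C'_p depending only on p, C_p, and ψ. -/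
/-!
Expand `y ↦ a x y` in its Taylor polynomial of degree `p - 1` about the left end of the support of
`ψ (2^ℓ y - k₂)`: the vanishing moments kill the polynomial, and the Lagrange remainder is at most
`Cp δ^(-1-p) (|supp|)^p / (p-1)!`, where `δ ≳ |k₁ - k₂| 2^(-ℓ)` is the distance between the two
supports (this is where `|k₁ - k₂| ≥ 2p` enters). Integrating against `|ψ (2^ℓ x - k₁)|` gives a
bound `C / |k₁ - k₂|^(p+1)` in which all powers of `2^ℓ` cancel.
-/

open MeasureTheory Set Function
open scoped Nat

section MomentCancellation

variable {w : ℝ → ℝ} {a b : ℝ}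

theorem integrable_mul_of_support_subset_Icc {g : ℝ → ℝ} (hw : Integrable w)
    (hsupp : support w ⊆ Icc a b) (hg : ContinuousOn g (Icc a b)) :
    Integrable (fun x => g x * w x) := by
  refine (integrableOn_iff_integrable_of_support_subset ?_).mp
    (hw.integrableOn.continuousOn_mul hg isCompact_Icc)
  exact (support_mul_subset_right _ _).trans hsupp

theorem integral_taylorWithinEval_mul_eq_zero (f : ℝ → ℝ) (n : ℕ) (s : Set ℝ)
    (hw : Integrable w) (hsupp : support w ⊆ Icc a b)
    (hmom : ∀ j ≤ n, ∫ x, (x - a) ^ j * w x = 0) :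
    ∫ x, taylorWithinEval f n s a x * w x = 0 := by
  have hmoment : ∀ j, Integrable (fun x => (x - a) ^ j * w x) := fun j =>
    integrable_mul_of_support_subset_Icc hw hsupp (by fun_prop)
  have hsummand : ∀ j x, ((j ! : ℝ)⁻¹ * (x - a) ^ j) • iteratedDerivWithin j f s a * w x
      = ((j ! : ℝ)⁻¹ * iteratedDerivWithin j f s a) * ((x - a) ^ j * w x) := fun j x => by
    rw [smul_eq_mul]; ring
  simp_rw [taylor_within_apply, Finset.sum_mul, hsummand]
  rw [integral_finsetSum _ fun j _ => (hmoment j).const_mul _]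
  refine Finset.sum_eq_zero fun j hj => ?_
  rw [integral_const_mul, hmom j (Nat.lt_succ_iff.mp (Finset.mem_range.mp hj)), mul_zero]

/-- Against a function with vanishing moments only the Taylor remainder of `f` survives. -/
theorem abs_integral_mul_le_of_moments_eq_zero {f : ℝ → ℝ} {M : ℝ} {n : ℕ} (hab : a ≤ b)
    (hf : ContDiffOn ℝ (n + 1) f (Icc a b))
    (hM : ∀ x ∈ Icc a b, ‖iteratedDerivWithin (n + 1) f (Icc a b) x‖ ≤ M)
    (hw : Integrable w) (hsupp : support w ⊆ Icc a b)
    (hmom : ∀ j ≤ n, ∫ x, (x - a) ^ j * w x = 0) :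
    |∫ x, f x * w x| ≤ M * (b - a) ^ (n + 1) / n ! * ∫ x, |w x| := by
  set T := taylorWithinEval f n (Icc a b) a
  have hT : Continuous T := by
    simp only [T, funext (taylor_within_apply f n (Icc a b) a), smul_eq_mul]; fun_prop
  have hfw := integrable_mul_of_support_subset_Icc hw hsupp hf.continuousOn
  have hTw := integrable_mul_of_support_subset_Icc hw hsupp hT.continuousOn
  have hremainder : ∀ x, ‖(f x - T x) * w x‖ ≤ M * (b - a) ^ (n + 1) / n ! * |w x| := by
    intro x
    by_cases hx : x ∈ Icc a b
    · rw [norm_mul, Real.norm_eq_abs]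
      refine mul_le_mul_of_nonneg_right ((taylor_mean_remainder_bound hab hf hx hM).trans ?_)
        (abs_nonneg _)
      have hM0 : 0 ≤ M := (norm_nonneg _).trans (hM x hx)
      gcongr
      · exact sub_nonneg.mpr hx.1
      · exact hx.2
    · simp [notMem_support.mp fun h => hx (hsupp h)]
  calc |∫ x, f x * w x|
      = ‖∫ x, (f x - T x) * w x‖ := by
        simp_rw [sub_mul]
        rw [integral_sub hfw hTw, integral_taylorWithinEval_mul_eq_zero f n _ hw hsupp hmom,
          sub_zero, Real.norm_eq_abs]
    _ ≤ ∫ x, M * (b - a) ^ (n + 1) / n ! * |w x| :=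
        norm_integral_le_of_norm_le (hw.abs.const_mul _) (.of_forall hremainder)
    _ = M * (b - a) ^ (n + 1) / n ! * ∫ x, |w x| := integral_const_mul _ _

end MomentCancellation

section Rescaling

variable {c : ℝ}

theorem integral_comp_mul_sub {E : Type*} [NormedAddCommGroup E] [NormedSpace ℝ E]
    (g : ℝ → E) (c k : ℝ) : ∫ y, g (c * y - k) = |c⁻¹| • ∫ t, g t := by
  rw [Measure.integral_comp_mul_left (fun t => g (t - k)), integral_sub_right_eq_self]

theorem MeasureTheory.Integrable.comp_mul_sub {ψ : ℝ → ℝ} (hψ : Integrable ψ) (hc : c ≠ 0)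
    (k : ℝ) : Integrable (fun y => ψ (c * y - k)) :=
  (hψ.comp_sub_right k).comp_mul_left' hc

theorem integral_abs_comp_mul_sub (ψ : ℝ → ℝ) (hc : 0 < c) (k : ℝ) :
    ∫ y, |ψ (c * y - k)| = c⁻¹ * ∫ t, |ψ t| := by
  rw [integral_comp_mul_sub (fun t => |ψ t|), abs_of_pos (inv_pos.mpr hc), smul_eq_mul]

theorem integral_moment_comp_mul_sub (ψ : ℝ → ℝ) (j : ℕ) (hc : c ≠ 0) (k : ℝ) :
    ∫ y, (y - k / c) ^ j * ψ (c * y - k) = |c⁻¹| * (c ^ j)⁻¹ * ∫ t, t ^ j * ψ t := by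
  have hshift : ∀ y, (y - k / c) ^ j * ψ (c * y - k) = ((c * y - k) / c) ^ j * ψ (c * y - k) :=
    fun y => by congr 2; field_simp
  simp_rw [hshift, integral_comp_mul_sub (fun t => (t / c) ^ j * ψ t), div_pow, div_eq_inv_mul,
    mul_assoc, integral_const_mul, smul_eq_mul]

theorem mem_Icc_div_iff (hc : 0 < c) {k r y : ℝ} :
    y ∈ Icc (k / c) ((k + r) / c) ↔ c * y - k ∈ Icc 0 r := by
  simp only [mem_Icc, div_le_iff₀ hc, le_div_iff₀ hc, sub_nonneg]
  constructor <;> rintro ⟨h₁, h₂⟩ <;> constructor <;> linarith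

theorem support_comp_mul_sub_subset {ψ : ℝ → ℝ} {r : ℝ} (hc : 0 < c) (k : ℝ)
    (hsupp : support ψ ⊆ Icc 0 r) :
    support (fun y => ψ (c * y - k)) ⊆ Icc (k / c) ((k + r) / c) :=
  fun _ hy => (mem_Icc_div_iff hc).mpr (hsupp hy)

theorem abs_integral_mul_comp_mul_sub_le {g ψ : ℝ → ℝ} {n : ℕ} {k r M : ℝ} (hc : 0 < c)
    (hr : 0 ≤ r) (hψ : Integrable ψ) (hsupp : support ψ ⊆ Icc 0 r)
    (hmom : ∀ j ≤ n, ∫ t, t ^ j * ψ t = 0)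
    (hg : ContDiffOn ℝ (n + 1) g (Icc (k / c) ((k + r) / c)))
    (hM : ∀ y ∈ Icc (k / c) ((k + r) / c),
      ‖iteratedDerivWithin (n + 1) g (Icc (k / c) ((k + r) / c)) y‖ ≤ M) :
    |∫ y, g y * ψ (c * y - k)| ≤ M * (r / c) ^ (n + 1) / n ! * (c⁻¹ * ∫ t, |ψ t|) := by
  have hlen : (k + r) / c - k / c = r / c := by ring
  rw [← hlen, ← integral_abs_comp_mul_sub ψ hc k]
  refine abs_integral_mul_le_of_moments_eq_zero (by gcongr; linarith) hg hM
    (hψ.comp_mul_sub hc.ne' k) (support_comp_mul_sub_subset hc k hsupp)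
    fun j hj => ?_
  rw [integral_moment_comp_mul_sub ψ j hc.ne', hmom j hj, mul_zero]

end Rescaling

theorem sub_le_mul_abs_sub {c r k₁ k₂ x y : ℝ} (hc : 0 < c) (hx : c * x - k₁ ∈ Icc 0 r)
    (hy : c * y - k₂ ∈ Icc 0 r) : |k₁ - k₂| - r ≤ c * |x - y| := by
  obtain ⟨hx₀, hxr⟩ := hx
  obtain ⟨hy₀, hyr⟩ := hy
  have hsplit : k₁ - k₂ = (c * x - c * y) - ((c * x - k₁) - (c * y - k₂)) := by ring
  have hoffset : |(c * x - k₁) - (c * y - k₂)| ≤ r :=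
    abs_sub_le_iff.mpr ⟨by linarith, by linarith⟩
  have hscale : |c * x - c * y| = c * |x - y| := by
    rw [← mul_sub, abs_mul, abs_of_pos hc]
  linarith [hsplit ▸ abs_sub (c * x - c * y) ((c * x - k₁) - (c * y - k₂))]

theorem norm_iteratedDerivWithin_le_of_forall_le_abs_sub {g : ℝ → ℝ} {s : Set ℝ} {n m : ℕ}
    {x δ C : ℝ} (hδ : 0 < δ) (hC : 0 ≤ C) (hg : ContDiffOn ℝ n g {y | y ≠ x})
    (hbound : ∀ y, x ≠ y → |iteratedDeriv n g y| ≤ C / |x - y| ^ m)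
    (hs : UniqueDiffOn ℝ s) (hfar : ∀ y ∈ s, δ ≤ |x - y|) :
    ∀ y ∈ s, ‖iteratedDerivWithin n g s y‖ ≤ C / δ ^ m := by
  intro y hy
  have hyx : y ≠ x := fun h => by simpa [h] using hδ.trans_le (hfar y hy)
  rw [iteratedDerivWithin_eq_iteratedDeriv hs (hg.contDiffAt (isOpen_ne.mem_nhds hyx)) hy,
    Real.norm_eq_abs]
  exact (hbound y hyx.symm).trans (by gcongr; exact hfar y hy)

theorem abs_integral_mul_le_of_abs_le {α : Type*} [MeasurableSpace α] {μ : Measure α}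
    {w g : α → ℝ} {B : ℝ} (hw : Integrable w μ) (hg : ∀ x, w x ≠ 0 → |g x| ≤ B) :
    |∫ x, w x * g x ∂μ| ≤ B * ∫ x, |w x| ∂μ := by
  rw [← integral_const_mul, ← Real.norm_eq_abs]
  refine norm_integral_le_of_norm_le (hw.abs.const_mul B) (.of_forall fun x => ?_)
  by_cases hx : w x = 0
  · simp [hx]
  · rw [norm_mul, Real.norm_eq_abs, mul_comm]
    exact mul_le_mul_of_nonneg_right (hg x hx) (abs_nonneg _)

theorem abs_integral_wavelet_mul_integral_kernel_le {ψ : ℝ → ℝ} {a : ℝ → ℝ → ℝ} {p : ℕ}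
    {Cp c k₁ k₂ : ℝ} (hp : 0 < p) (hψ : Integrable ψ) (hsupp : support ψ ⊆ Icc 0 (2 * p - 1))
    (hmom : ∀ j < p, ∫ t, t ^ j * ψ t = 0)
    (hsm : ∀ x, ContDiffOn ℝ p (fun y => a x y) {y | y ≠ x})
    (hker : ∀ x y, x ≠ y → |iteratedDeriv p (fun t => a x t) y| ≤ Cp / |x - y| ^ (1 + p))
    (hCp : 0 ≤ Cp) (hc : 0 < c) (hk : 2 * p ≤ |k₁ - k₂|) :
    |∫ x, ψ (c * x - k₁) * (c * ∫ y, a x y * ψ (c * y - k₂))| ≤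
      Cp * (2 * p) ^ (1 + p) * (2 * p - 1) ^ p * (∫ t, |ψ t|) ^ 2 / (p - 1)! /
        |k₁ - k₂| ^ (p + 1) := by
  obtain ⟨n, rfl⟩ : ∃ n, p = n + 1 := ⟨p - 1, by omega⟩
  set P : ℝ := ((n + 1 : ℕ) : ℝ)
  set r := 2 * P - 1
  set d := |k₁ - k₂|
  set I := ∫ t, |ψ t|
  have hP : 1 ≤ P := by simp [P]
  have hd : 0 < d := by linarith
  have hc0 : c ≠ 0 := hc.ne'
  -- the two supports are at distance at least `δ`, since `d - r ≥ d / (2 P)` once `d ≥ 2 P`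
  set δ := d / (2 * P * c)
  have hδ : 0 < δ := by positivity
  have hfar : ∀ x, c * x - k₁ ∈ Icc 0 r → ∀ y ∈ Icc (k₂ / c) ((k₂ + r) / c), δ ≤ |x - y| := by
    intro x hx y hy
    have hsep := sub_le_mul_abs_sub hc hx ((mem_Icc_div_iff hc).mp hy)
    rw [div_le_iff₀ (by positivity)]
    nlinarith
  set M := Cp / δ ^ (1 + (n + 1))
  have hinner : ∀ x, ψ (c * x - k₁) ≠ 0 → |c * ∫ y, a x y * ψ (c * y - k₂)| ≤
      c * (M * (r / c) ^ (n + 1) / n ! * (c⁻¹ * I)) := by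
    intro x hx
    have hx' : c * x - k₁ ∈ Icc 0 r := hsupp hx
    have hnear : Icc (k₂ / c) ((k₂ + r) / c) ⊆ {y | y ≠ x} := fun y hy hyx => by
      simpa [hyx] using hδ.trans_le (hfar x hx' y hy)
    have hlt : k₂ / c < (k₂ + r) / c := by gcongr; linarith
    rw [abs_mul, abs_of_pos hc]
    gcongr
    exact abs_integral_mul_comp_mul_sub_le hc (by linarith) hψ hsupp
      (fun j hj => hmom j (by omega)) (by exact_mod_cast (hsm x).mono hnear)
      (norm_iteratedDerivWithin_le_of_forall_le_abs_sub hδ hCp (hsm x) (hker x)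
        (uniqueDiffOn_Icc hlt) (hfar x hx'))
  have hP0 : P ≠ 0 := by positivity
  have hd0 : d ≠ 0 := hd.ne'
  calc _ ≤ c * (M * (r / c) ^ (n + 1) / n ! * (c⁻¹ * I)) * (c⁻¹ * I) :=
        (abs_integral_mul_le_of_abs_le (hψ.comp_mul_sub hc0 k₁) hinner).trans_eq
          (by rw [integral_abs_comp_mul_sub ψ hc k₁])
    _ = _ := by
        simp only [M, δ, Nat.add_sub_cancel, div_pow, mul_pow]
        field_simp
        ring

theorem nonstandard_coefficients_decay_general
    (p : ℕ) (hp : 0 < p) (ψ : ℝ → ℝ)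
    (hψint : Integrable ψ)
    (hψsupp : tsupport ψ ⊆ Set.Icc (0 : ℝ) (2 * (p : ℝ) - 1))
    (hmom : ∀ j : ℕ, j < p → (∫ x : ℝ, x ^ j * ψ x) = 0)
    (Cp : ℝ) (a : ℝ → ℝ → ℝ)
    (hsm₂ : ∀ x : ℝ, ContDiffOn ℝ p (fun y => a x y) {y : ℝ | y ≠ x})
    (hker : ∀ x y : ℝ, x ≠ y →
      |iteratedDeriv p (fun t => a t y) x| + |iteratedDeriv p (fun t => a x t) y| ≤
        Cp / |x - y| ^ (1 + p)) :
    ∃ C' : ℝ, ∀ (ℓ : ℕ) (k₁ k₂ : ℤ), 2 * (p : ℤ) ≤ |k₁ - k₂| →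
      |∫ x : ℝ, ∫ y : ℝ,
          ((2 : ℝ) ^ ((ℓ : ℝ) / 2) * ψ ((2 : ℝ) ^ ℓ * x - k₁)) * a x y *
            ((2 : ℝ) ^ ((ℓ : ℝ) / 2) * ψ ((2 : ℝ) ^ ℓ * y - k₂))| ≤
        C' / (1 + (|k₁ - k₂| : ℝ) ^ (p + 1)) := by
  have hCp : 0 ≤ Cp := by
    have h := hker 0 1 zero_ne_one
    rw [zero_sub, abs_neg, abs_one, one_pow, div_one] at h
    exact (add_nonneg (abs_nonneg _) (abs_nonneg _)).trans h
  have hp1 : (1 : ℝ) ≤ p := by exact_mod_cast hp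
  set X := Cp * (2 * p) ^ (1 + p) * (2 * p - 1) ^ p * (∫ t, |ψ t|) ^ 2 / (p - 1)!
  have hX : 0 ≤ X := by unfold X; bound
  refine ⟨2 * X, fun ℓ k₁ k₂ hk => ?_⟩
  have hd : 2 * (p : ℝ) ≤ |(k₁ : ℝ) - k₂| := by exact_mod_cast hk
  have hscale : (2 : ℝ) ^ ((ℓ : ℝ) / 2) * 2 ^ ((ℓ : ℝ) / 2) = 2 ^ ℓ := by
    rw [← Real.rpow_add two_pos, add_halves, Real.rpow_natCast]
  have hfactor : ∀ x, ∫ y, ((2 : ℝ) ^ ((ℓ : ℝ) / 2) * ψ (2 ^ ℓ * x - k₁)) * a x y *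
      ((2 : ℝ) ^ ((ℓ : ℝ) / 2) * ψ (2 ^ ℓ * y - k₂))
      = ψ (2 ^ ℓ * x - k₁) * (2 ^ ℓ * ∫ y, a x y * ψ (2 ^ ℓ * y - k₂)) := fun x => by
    rw [← integral_const_mul, ← integral_const_mul, ← hscale]
    congr 1; ext y; ring
  simp_rw [hfactor]
  have hD : 1 ≤ |(k₁ : ℝ) - k₂| ^ (p + 1) := one_le_pow₀ (by linarith)
  refine (abs_integral_wavelet_mul_integral_kernel_le hp hψint ((subset_tsupport ψ).trans hψsupp)
    hmom hsm₂ (fun x y hxy => (le_add_of_nonneg_left (abs_nonneg _)).trans (hker x y hxy)) hCp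
    (by positivity) hd).trans ?_
  rw [div_le_div_iff₀ (by positivity) (by positivity)]
  nlinarith

theorem nonstandard_coefficients_decay
    (p : ℕ) (hp : 0 < p) (ψ : ℝ → ℝ)
    (hψint : Integrable ψ)
    (hψsupp : tsupport ψ ⊆ Set.Icc (0 : ℝ) (2 * (p : ℝ) - 1))
    (hmom : ∀ j : ℕ, j < p → (∫ x : ℝ, x ^ j * ψ x) = 0)
    (Cp : ℝ) (a : ℝ → ℝ → ℝ)
    (hsm₁ : ∀ y : ℝ, ContDiffOn ℝ p (fun x => a x y) {x : ℝ | x ≠ y})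
    (hsm₂ : ∀ x : ℝ, ContDiffOn ℝ p (fun y => a x y) {y : ℝ | y ≠ x})
    (hker : ∀ x y : ℝ, x ≠ y →
      |iteratedDeriv p (fun t => a t y) x| + |iteratedDeriv p (fun t => a x t) y| ≤
        Cp / |x - y| ^ (1 + p)) :
    ∃ C' : ℝ, ∀ (ℓ : ℕ) (k₁ k₂ : ℤ), 2 * (p : ℤ) ≤ |k₁ - k₂| →
      |∫ x : ℝ, ∫ y : ℝ,
          ((2 : ℝ) ^ ((ℓ : ℝ) / 2) * ψ ((2 : ℝ) ^ ℓ * x - k₁)) * a x y *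
            ((2 : ℝ) ^ ((ℓ : ℝ) / 2) * ψ ((2 : ℝ) ^ ℓ * y - k₂))| ≤
        C' / (1 + (|k₁ - k₂| : ℝ) ^ (p + 1)) :=
  nonstandard_coefficients_decay_general p hp ψ hψint hψsupp hmom Cp a hsm₂ hker
end
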